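/- arXiv:2508.06212 — 3 statements merged into one kernel-verified Lean document; each statement's English description precedes it below -/
import Mathlib

section
/- Every totally-nested 2-separation of a graph is half-connected: if (A, B) is a 2-separation of G that is nested with every 2-separation of G, then G[A \ B] or G[B \ A] is connected. -/
open SimpleGraph

variable {V : Type*}

/-- `u` lies on every path (hence the unique path) from root `r` to `v` in tree `T`:
`u` is an ancestor of `v`. -/
def Anc (T : SimpleGraph V) (r u v : V) : Prop :=
  ∀ p : T.Walk r v, p.IsPath → u ∈ p.support

/-- proper ancestor -/
def PAnc (T : SimpleGraph V) (r u v : V) : Prop :=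
  Anc T r u v ∧ u ≠ v

/-- `T` is a normal spanning tree of `G` rooted at `r`. -/
def IsNormalSpanningTree (G T : SimpleGraph V) (r : V) : Prop :=
  T.IsTree ∧ T ≤ G ∧ ∀ u v : V, G.Adj u v → Anc T r u v ∨ Anc T r v u

/-- `w` is a child of `v` in the rooted tree `(T, r)`. -/
def IsChild (T : SimpleGraph V) (r v w : V) : Prop :=
  T.Adj v w ∧ Anc T r v w

/-- the set of descendants of `v` (including `v`). -/
def Desc (T : SimpleGraph V) (r v : V) : Set V := {u | Anc T r v u}

/-- `L(v)`: proper ancestors of `v` adjacent in `G` to some descendant of `v`. -/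
def Lset (G T : SimpleGraph V) (r v : V) : Set V :=
  {u | PAnc T r u v ∧ ∃ w, Anc T r v w ∧ G.Adj u w}

/-- `x` is the `k`-th lowpoint of `v`: the `k`-th lowest element of `L(v)`,
or `v` itself if `|L(v)| < k`. -/
def IsKthLowpoint (G T : SimpleGraph V) (r : V) (k : ℕ) (v x : V) : Prop :=
  (x ∈ Lset G T r v ∧ {u ∈ Lset G T r v | PAnc T r u x}.ncard = k - 1) ∨
  ((Lset G T r v).ncard < k ∧ x = v)

/-- `x` is the highpoint of `v`: the highest element of `L(v) \ {parent v}`,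
or `v` itself if that set is empty. -/
def IsHighpoint (G T : SimpleGraph V) (r : V) (v x : V) : Prop :=
  (x ∈ Lset G T r v ∧ ¬ IsChild T r x v ∧
    ∀ u ∈ Lset G T r v, ¬ IsChild T r u v → Anc T r u x) ∨
  ((∀ u ∈ Lset G T r v, IsChild T r u v) ∧ x = v)

/-- a numbering of the vertices by `1, …, n`. -/
def IsNumbering [Fintype V] (num : V → ℕ) : Prop :=
  Function.Injective num ∧ ∀ v, num v ∈ Set.Icc 1 (Fintype.card V)

/-- The numbering `num` is compatible with the normal spanning tree `(T, r)`,
where `lwpt1 v` and `lwpt2 v` are the first and second lowpoints of `v`. -/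
def CompatibleNumbering [Fintype V] (G T : SimpleGraph V) (r : V)
    (num : V → ℕ) (lwpt1 lwpt2 : V → V) : Prop :=
  IsNumbering num ∧
  (∀ v : V, num '' Desc T r v = Set.Icc (num v) (num v + (Desc T r v).ncard - 1)) ∧
  (∀ v, IsKthLowpoint G T r 1 v (lwpt1 v)) ∧
  (∀ v, IsKthLowpoint G T r 2 v (lwpt2 v)) ∧
  (∀ p j k : V, IsChild T r p j → IsChild T r p k → num j < num k →
    num (lwpt1 k) < num (lwpt1 j) ∨
      (lwpt1 j = lwpt1 k ∧ num (lwpt2 j) ≤ num (lwpt2 k)))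

/-- `w` is the left child of `v`: its largest-numbered child. -/
def IsLeftChild (T : SimpleGraph V) (r : V) (num : V → ℕ) (v w : V) : Prop :=
  IsChild T r v w ∧ ∀ u, IsChild T r v u → num u ≤ num w

/-- `w` is a leftmost descendant of `v`. -/
def LeftmostDesc (T : SimpleGraph V) (r : V) (num : V → ℕ) (v w : V) : Prop :=
  Relation.ReflTransGen (IsLeftChild T r num) v w

/-- `T[a,b]` is a leftmost path: `b` is a leftmost descendant of some child of `a`. -/
def IsLeftmostPath (T : SimpleGraph V) (r : V) (num : V → ℕ) (a b : V) : Prop :=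
  ∃ a', IsChild T r a a' ∧ LeftmostDesc T r num a' b

/-- a back-edge `(x, y)` with `x` a descendant of `y`. -/
def IsBackEdge (G T : SimpleGraph V) (r : V) (x y : V) : Prop :=
  G.Adj x y ∧ ¬ T.Adj x y ∧ PAnc T r y x

/-- `T[a,b]` is stable. -/
def Stable (G T : SimpleGraph V) (r : V) (num : V → ℕ) (a b : V) : Prop :=
  ∃ a', IsChild T r a a' ∧ LeftmostDesc T r num a' b ∧
    ∀ x y, IsBackEdge G T r x y → num a' ≤ num x → num x < num b → num a ≤ num y

/-- `(A, B)` is a separation of `G`. -/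
def IsSeparation (G : SimpleGraph V) (A B : Set V) : Prop :=
  A ∪ B = Set.univ ∧ (A \ B).Nonempty ∧ (B \ A).Nonempty ∧
    ∀ u ∈ A \ B, ∀ v ∈ B \ A, ¬ G.Adj u v

/-- a 2-separation. -/
def IsSeparation2 (G : SimpleGraph V) (A B : Set V) : Prop :=
  IsSeparation G A B ∧ (A ∩ B).ncard = 2

/-- two separations are nested (up to swapping sides). -/
def Nested (A B C D : Set V) : Prop :=
  (A ⊆ C ∧ D ⊆ B) ∨ (A ⊆ D ∧ C ⊆ B) ∨ (B ⊆ C ∧ D ⊆ A) ∨ (B ⊆ D ∧ C ⊆ A)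

/-- a totally-nested 2-separation. -/
def TotallyNested2 (G : SimpleGraph V) (A B : Set V) : Prop :=
  IsSeparation2 G A B ∧ ∀ C D : Set V, IsSeparation2 G C D → Nested A B C D

/-- a half-connected separation. -/
def HalfConnected (G : SimpleGraph V) (A B : Set V) : Prop :=
  (G.induce (A \ B)).Connected ∨ (G.induce (B \ A)).Connected

/-- the open tree path `T(a,b)`. -/
def Topen (T : SimpleGraph V) (r a b : V) : Set V :=
  {u | PAnc T r a u ∧ PAnc T r u b}

/-- type-2 separations. -/
def IsType2Sep (G T : SimpleGraph V) (r : V) (A B : Set V) : Prop :=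
  IsSeparation2 G A B ∧ ∃ a b : V, A ∩ B = {a, b} ∧ r ≠ a ∧ r ≠ b ∧
    (Topen T r a b).Nonempty ∧
    ((r ∈ A \ B ∧ Topen T r a b ⊆ B \ A) ∨ (r ∈ B \ A ∧ Topen T r a b ⊆ A \ B))

/-- type-1 separations. -/
def IsType1Sep (G T : SimpleGraph V) (r : V) (A B : Set V) : Prop :=
  IsSeparation2 G A B ∧ ¬ IsType2Sep G T r A B

/-- 2-connectivity: more than two vertices and no cutvertex. -/
def TwoConnected [Fintype V] (G : SimpleGraph V) : Prop :=
  2 < Fintype.card V ∧ ∀ v : V, (G.induce {u | u ≠ v}).Connected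

/-- `(A,B)` separates `u` and `v`. -/
def SepSeparates (A B : Set V) (u v : V) : Prop :=
  (u ∈ A \ B ∧ v ∈ B \ A) ∨ (u ∈ B \ A ∧ v ∈ A \ B)

/-- minimal separation: each separator vertex has neighbours on both proper sides. -/
def IsMinimalSep (G : SimpleGraph V) (A B : Set V) : Prop :=
  IsSeparation G A B ∧ ∀ v ∈ A ∩ B,
    (∃ u ∈ A \ B, G.Adj v u) ∧ (∃ u ∈ B \ A, G.Adj v u)

/-- `m` is the number of the smallest-numbered neighbour of `v`. -/
def IsNmin (G : SimpleGraph V) (num : V → ℕ) (v : V) (m : ℕ) : Prop :=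
  (∃ u, G.Adj v u ∧ num u = m) ∧ ∀ u, G.Adj v u → m ≤ num u

/-- `w` is the second-largest child of `v`. -/
def IsSecondLargestChild (T : SimpleGraph V) (r : V) (num : V → ℕ) (v w : V) : Prop :=
  IsChild T r v w ∧ ({u | IsChild T r v u ∧ num w < num u}).ncard = 1

/-- `m = witn(v)`. -/
def IsWitn (G T : SimpleGraph V) (r : V) (num : V → ℕ) (lwpt1 : V → V)
    (v : V) (m : ℕ) : Prop :=
  (∃ w, IsSecondLargestChild T r num v w ∧
    ∃ nm, IsNmin G num v nm ∧ m = min nm (num (lwpt1 w))) ∨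
  ((¬ ∃ w, IsSecondLargestChild T r num v w) ∧ IsNmin G num v m)

/-- `S` is an interval of `X` with respect to the numbering. -/
def IsIntervalIn (num : V → ℕ) (X S : Set V) : Prop :=
  S ⊆ X ∧ ∀ x ∈ S, ∀ z ∈ S, ∀ y ∈ X, num x ≤ num y → num y ≤ num z → y ∈ S

/-- `S` is a cyclic interval of `X`. -/
def IsCyclicIntervalIn (num : V → ℕ) (X S : Set V) : Prop :=
  IsIntervalIn num X S ∨ IsIntervalIn num X (X \ S)

/-- If a nonempty induced subgraph is disconnected, its vertex set splits into two
nonempty parts with no edges between them. -/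
lemma exists_split (G : SimpleGraph V) {X : Set V} (hne : X.Nonempty)
    (hnc : ¬ (G.induce X).Connected) :
    ∃ P Q : Set V, P.Nonempty ∧ Q.Nonempty ∧ P ∪ Q = X ∧ Disjoint P Q ∧
      ∀ u ∈ P, ∀ v ∈ Q, ¬ G.Adj u v := by
  haveI hX : Nonempty X := hne.to_subtype
  have hpc : ¬ (G.induce X).Preconnected := fun hp => hnc ⟨hp⟩
  rw [SimpleGraph.Preconnected] at hpc
  push_neg at hpc
  obtain ⟨a, b, hab⟩ := hpc
  refine ⟨{v | ∃ h : v ∈ X, (G.induce X).Reachable a ⟨v, h⟩},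
    {v | ∃ h : v ∈ X, ¬ (G.induce X).Reachable a ⟨v, h⟩},
    ⟨a.1, a.2, by exact SimpleGraph.Reachable.refl a⟩,
    ⟨b.1, b.2, fun hr => hab hr⟩, ?_, ?_, ?_⟩
  · ext v
    constructor
    · rintro (⟨hv, -⟩ | ⟨hv, -⟩) <;> exact hv
    · intro hv
      by_cases hr : (G.induce X).Reachable a ⟨v, hv⟩
      · exact Or.inl ⟨hv, hr⟩
      · exact Or.inr ⟨hv, hr⟩
  · rw [Set.disjoint_left]
    rintro v ⟨hv, hr⟩ ⟨hv', hnr⟩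
    exact hnr hr
  · rintro u ⟨hu, hru⟩ v ⟨hv, hnrv⟩ hadj
    have : (G.induce X).Adj ⟨u, hu⟩ ⟨v, hv⟩ := hadj
    exact hnrv (hru.trans this.reachable)

/-- Every totally-nested 2-separation of a graph is half-connected. -/
theorem totallyNested_halfConnected (G : SimpleGraph V) (A B : Set V)
    (h : TotallyNested2 G A B) : HalfConnected G A B := by
  obtain ⟨⟨⟨huniv, hABne, hBAne, hedge⟩, hcard⟩, hnest⟩ := h
  by_contra hc
  rw [HalfConnected, not_or] at hc
  obtain ⟨hcA, hcB⟩ := hc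
  obtain ⟨P₁, P₂, hP₁ne, hP₂ne, hPun, hPdisj, hPedge⟩ := exists_split G hABne hcA
  obtain ⟨Q₁, Q₂, hQ₁ne, hQ₂ne, hQun, hQdisj, hQedge⟩ := exists_split G hBAne hcB
  have hP₁ : P₁ ⊆ A \ B := hPun ▸ Set.subset_union_left
  have hP₂ : P₂ ⊆ A \ B := hPun ▸ Set.subset_union_right
  have hQ₁ : Q₁ ⊆ B \ A := hQun ▸ Set.subset_union_left
  have hQ₂ : Q₂ ⊆ B \ A := hQun ▸ Set.subset_union_right
  set S : Set V := A ∩ B with hS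
  set C : Set V := P₁ ∪ Q₁ ∪ S with hC
  set D : Set V := P₂ ∪ Q₂ ∪ S with hD
  have hmemC : ∀ x, x ∈ C ↔ x ∈ P₁ ∨ x ∈ Q₁ ∨ x ∈ S := fun x => by
    simp [hC, Set.mem_union, or_assoc]
  have hmemD : ∀ x, x ∈ D ↔ x ∈ P₂ ∨ x ∈ Q₂ ∨ x ∈ S := fun x => by
    simp [hD, Set.mem_union, or_assoc]
  -- basic non-membership facts
  have hABmem : ∀ x ∈ A \ B, x ∉ B \ A ∧ x ∉ S := by
    rintro x ⟨hxA, hxB⟩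
    exact ⟨fun h => hxB h.1, fun h => hxB h.2⟩
  have hBAmem : ∀ x ∈ B \ A, x ∉ A \ B ∧ x ∉ S := by
    rintro x ⟨hxB, hxA⟩
    exact ⟨fun h => hxA h.1, fun h => hxA h.1⟩
  have hP₁nD : ∀ x ∈ P₁, x ∉ D := by
    intro x hx hxD
    rcases (hmemD x).mp hxD with hxD | hxD | hxD
    · exact Set.disjoint_left.mp hPdisj hx hxD
    · exact (hABmem x (hP₁ hx)).1 (hQ₂ hxD)
    · exact (hABmem x (hP₁ hx)).2 hxD
  have hP₂nC : ∀ x ∈ P₂, x ∉ C := by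
    intro x hx hxC
    rcases (hmemC x).mp hxC with hxC | hxC | hxC
    · exact Set.disjoint_left.mp hPdisj hxC hx
    · exact (hABmem x (hP₂ hx)).1 (hQ₁ hxC)
    · exact (hABmem x (hP₂ hx)).2 hxC
  have hQ₁nD : ∀ x ∈ Q₁, x ∉ D := by
    intro x hx hxD
    rcases (hmemD x).mp hxD with hxD | hxD | hxD
    · exact (hBAmem x (hQ₁ hx)).1 (hP₂ hxD)
    · exact Set.disjoint_left.mp hQdisj hx hxD
    · exact (hBAmem x (hQ₁ hx)).2 hxD
  have hQ₂nC : ∀ x ∈ Q₂, x ∉ C := by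
    intro x hx hxC
    rcases (hmemC x).mp hxC with hxC | hxC | hxC
    · exact (hBAmem x (hQ₂ hx)).1 (hP₁ hxC)
    · exact Set.disjoint_left.mp hQdisj hxC hx
    · exact (hBAmem x (hQ₂ hx)).2 hxC
  have hCD : C ∩ D = S := by
    apply Set.Subset.antisymm
    · rintro x ⟨hxC, hxD⟩
      rcases (hmemC x).mp hxC with hx | hx | hx
      · exact absurd hxD (hP₁nD x hx)
      · exact absurd hxD (hQ₁nD x hx)
      · exact hx
    · intro x hx
      exact ⟨(hmemC x).mpr (Or.inr (Or.inr hx)), (hmemD x).mpr (Or.inr (Or.inr hx))⟩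
  have hCmD : ∀ x ∈ C \ D, x ∈ P₁ ∨ x ∈ Q₁ := by
    rintro x ⟨hxC, hxD⟩
    rcases (hmemC x).mp hxC with hx | hx | hx
    · exact Or.inl hx
    · exact Or.inr hx
    · exact absurd ((hmemD x).mpr (Or.inr (Or.inr hx))) hxD
  have hDmC : ∀ x ∈ D \ C, x ∈ P₂ ∨ x ∈ Q₂ := by
    rintro x ⟨hxD, hxC⟩
    rcases (hmemD x).mp hxD with hx | hx | hx
    · exact Or.inl hx
    · exact Or.inr hx
    · exact absurd ((hmemC x).mpr (Or.inr (Or.inr hx))) hxC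
  obtain ⟨p₁, hp₁⟩ := hP₁ne
  obtain ⟨p₂, hp₂⟩ := hP₂ne
  obtain ⟨q₁, hq₁⟩ := hQ₁ne
  obtain ⟨q₂, hq₂⟩ := hQ₂ne
  -- (C, D) is a 2-separation
  have hsep2 : IsSeparation2 G C D := by
    refine ⟨⟨?_, ⟨p₁, (hmemC p₁).mpr (Or.inl hp₁), hP₁nD p₁ hp₁⟩,
      ⟨p₂, (hmemD p₂).mpr (Or.inl hp₂), hP₂nC p₂ hp₂⟩, ?_⟩, by rw [hCD]; exact hcard⟩
    · apply Set.eq_univ_of_univ_subset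
      rw [← huniv]
      intro x hx
      rw [Set.mem_union] at hx ⊢
      rw [hmemC x, hmemD x]
      rcases hx with hxA | hxB
      · by_cases hxB : x ∈ B
        · exact Or.inl (Or.inr (Or.inr ⟨hxA, hxB⟩))
        · have hx' : x ∈ P₁ ∪ P₂ := hPun.symm ▸ (⟨hxA, hxB⟩ : x ∈ A \ B)
          rw [Set.mem_union] at hx'
          rcases hx' with hx' | hx'
          · exact Or.inl (Or.inl hx')
          · exact Or.inr (Or.inl hx')
      · by_cases hxA : x ∈ A
        · exact Or.inl (Or.inr (Or.inr ⟨hxA, hxB⟩))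
        · have hx' : x ∈ Q₁ ∪ Q₂ := hQun.symm ▸ (⟨hxB, hxA⟩ : x ∈ B \ A)
          rw [Set.mem_union] at hx'
          rcases hx' with hx' | hx'
          · exact Or.inl (Or.inr (Or.inl hx'))
          · exact Or.inr (Or.inr (Or.inl hx'))
    · intro u hu v hv hadj
      rcases hCmD u hu with hu' | hu' <;> rcases hDmC v hv with hv' | hv'
      · exact hPedge u hu' v hv' hadj
      · exact hedge u (hP₁ hu') v (hQ₂ hv') hadj
      · exact hedge v (hP₂ hv') u (hQ₁ hu') hadj.symm
      · exact hQedge u hu' v hv' hadj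
  -- but (C, D) crosses (A, B): contradiction
  rcases hnest C D hsep2 with ⟨hAC, -⟩ | ⟨hAD, -⟩ | ⟨hBC, -⟩ | ⟨hBD, -⟩
  · exact hP₂nC p₂ hp₂ (hAC (hP₂ hp₂).1)
  · exact hP₁nD p₁ hp₁ (hAD (hP₁ hp₁).1)
  · exact hQ₂nC q₂ hq₂ (hBC (hQ₂ hq₂).1)
  · exact hQ₁nD q₁ hq₁ (hBD (hQ₁ hq₁).1)
end

section
/- If a 2-separation (A, B) of a graph G is not half-connected (i.e., both G[A \ B] and G[B \ A] are disconnected), then there exists a 2-separation (C, D) of G with the same separator A ∩ B that crosses (A, B). Concretely, if H₁, H₂ are distinct components of G[A \ B] and H₃, H₄ are distinct components of G[B \ A], then setting C = V(H₁) ∪ V(H₃) ∪ (A ∩ B) and D = V(G) \ (C \ (A ∩ B)) gives a 2-separation crossing (A,B). -/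
open SimpleGraph

variable {V : Type*}

/-- If a 2-separation `(A,B)` is not half-connected, then, picking distinct components
`H₁, H₂` of `G[A \ B]` and distinct components `H₃, H₄` of `G[B \ A]`, the pair
`(C, D)` with `C = V(H₁) ∪ V(H₃) ∪ (A ∩ B)` and `D = V(G) \ (C \ (A ∩ B))` is a
2-separation of `G` with the same separator `A ∩ B` that crosses `(A, B)`. -/
theorem notHalfConnected_isCrossed (G : SimpleGraph V) (A B : Set V)
    (hsep : IsSeparation2 G A B)
    (H₁ H₂ : (G.induce (A \ B)).ConnectedComponent)
    (H₃ H₄ : (G.induce (B \ A)).ConnectedComponent)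
    (h12 : H₁ ≠ H₂) (h34 : H₃ ≠ H₄)
    (C D : Set V)
    (hC : C = Subtype.val '' H₁.supp ∪ Subtype.val '' H₃.supp ∪ (A ∩ B))
    (hD : D = Set.univ \ (C \ (A ∩ B))) :
    IsSeparation2 G C D ∧ C ∩ D = A ∩ B ∧ ¬ Nested A B C D := by
  obtain ⟨⟨hunion, -, -, hedge⟩, hcard⟩ := hsep
  -- membership characterizations
  have memH1 : ∀ x : V, x ∈ Subtype.val '' H₁.supp ↔
      ∃ h : x ∈ A \ B, (G.induce (A \ B)).connectedComponentMk ⟨x, h⟩ = H₁ := by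
    intro x
    constructor
    · rintro ⟨⟨y, hy⟩, hm, rfl⟩; exact ⟨hy, hm⟩
    · rintro ⟨h, hm⟩; exact ⟨⟨x, h⟩, hm, rfl⟩
  have memH3 : ∀ x : V, x ∈ Subtype.val '' H₃.supp ↔
      ∃ h : x ∈ B \ A, (G.induce (B \ A)).connectedComponentMk ⟨x, h⟩ = H₃ := by
    intro x
    constructor
    · rintro ⟨⟨y, hy⟩, hm, rfl⟩; exact ⟨hy, hm⟩
    · rintro ⟨h, hm⟩; exact ⟨⟨x, h⟩, hm, rfl⟩
  have h1sub : Subtype.val '' H₁.supp ⊆ A \ B := by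
    rintro x hx; exact ((memH1 x).1 hx).1
  have h3sub : Subtype.val '' H₃.supp ⊆ B \ A := by
    rintro x hx; exact ((memH3 x).1 hx).1
  have hSC : A ∩ B ⊆ C := by rw [hC]; exact Set.subset_union_right
  have hCD : C ∩ D = A ∩ B := by
    subst hD
    ext x
    constructor
    · rintro ⟨hxC, -, hxD⟩
      by_contra h
      exact hxD ⟨hxC, h⟩
    · intro h
      exact ⟨hSC h, trivial, fun hc => hc.2 h⟩
  -- description of D
  have memD : ∀ x : V, x ∈ D ↔ x ∉ C ∨ x ∈ A ∩ B := by
    intro x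
    subst hD
    simp only [Set.mem_diff, Set.mem_univ, true_and, not_and, not_not]
    constructor
    · intro h; by_cases hx : x ∈ C
      · exact Or.inr (h hx)
      · exact Or.inl hx
    · rintro (h | h) hx
      · exact absurd hx h
      · exact h
  -- C \ D = H1 ∪ H3
  have hCdiffD : C \ D = Subtype.val '' H₁.supp ∪ Subtype.val '' H₃.supp := by
    ext x
    simp only [Set.mem_diff, memD, not_or, not_not]
    constructor
    · rintro ⟨hxC, hxC', hxS⟩
      rw [hC] at hxC
      rcases hxC with (h | h) | h
      · exact Or.inl h
      · exact Or.inr h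
      · exact absurd h hxS
    · intro h
      have hxC : x ∈ C := by rw [hC]; exact Or.inl h
      refine ⟨hxC, hxC, ?_⟩
      rcases h with h | h
      · exact fun hs => (h1sub h).2 hs.2
      · exact fun hs => (h3sub h).2 hs.1
  have hDdiffC : D \ C = Cᶜ := by
    ext x
    simp only [Set.mem_diff, memD, Set.mem_compl_iff]
    constructor
    · rintro ⟨_, hx⟩; exact hx
    · intro hx; exact ⟨Or.inl hx, hx⟩
  -- representatives
  obtain ⟨x1, hx1⟩ := H₁.exists_rep
  obtain ⟨x2, hx2⟩ := H₂.exists_rep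
  obtain ⟨x3, hx3⟩ := H₃.exists_rep
  obtain ⟨x4, hx4⟩ := H₄.exists_rep
  have hx1C : (x1 : V) ∈ Subtype.val '' H₁.supp := ⟨x1, hx1, rfl⟩
  have hx3C : (x3 : V) ∈ Subtype.val '' H₃.supp := ⟨x3, hx3, rfl⟩
  have hx2nC : (x2 : V) ∉ C := by
    rw [hC]
    rintro ((h | h) | h)
    · obtain ⟨h', hm⟩ := (memH1 _).1 h
      have : (⟨(x2 : V), h'⟩ : ↥(A \ B)) = x2 := rfl
      rw [this] at hm
      have hm2 : (G.induce (A \ B)).connectedComponentMk x2 = H₂ := hx2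
      exact h12 (hm.symm.trans hm2)
    · exact (h3sub h).2 x2.2.1
    · exact x2.2.2 h.2
  have hx4nC : (x4 : V) ∉ C := by
    rw [hC]
    rintro ((h | h) | h)
    · exact (h1sub h).2 x4.2.1
    · obtain ⟨h', hm⟩ := (memH3 _).1 h
      have : (⟨(x4 : V), h'⟩ : ↥(B \ A)) = x4 := rfl
      rw [this] at hm
      have hm4 : (G.induce (B \ A)).connectedComponentMk x4 = H₄ := hx4
      exact h34 (hm.symm.trans hm4)
    · exact x4.2.2 h.1
  -- separation
  have hsepCD : IsSeparation G C D := by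
    refine ⟨?_, ?_, ?_, ?_⟩
    · ext x
      simp only [Set.mem_union, Set.mem_univ, iff_true, memD]
      by_cases hx : x ∈ C
      · exact Or.inl hx
      · exact Or.inr (Or.inl hx)
    · refine ⟨(x1 : V), ?_⟩
      rw [hCdiffD]; exact Or.inl hx1C
    · refine ⟨(x2 : V), ?_⟩
      rw [hDdiffC]; exact hx2nC
    · intro u hu v hv hadj
      rw [hCdiffD] at hu
      rw [hDdiffC] at hv
      have hvAB : v ∈ Set.univ := Set.mem_univ v
      rw [← hunion] at hvAB
      rcases hu with hu | hu
      · obtain ⟨huAB, hmk⟩ := (memH1 u).1 hu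
        have hvnBA : v ∉ B \ A := fun hvBA => hedge u huAB v hvBA hadj
        have hvA : v ∈ A := by
          rcases hvAB with h | h
          · exact h
          · by_contra hvA; exact hvnBA ⟨h, hvA⟩
        have hvnB : v ∉ B := by
          intro hvB
          exact hv (hSC ⟨hvA, hvB⟩)
        have hvAB' : v ∈ A \ B := ⟨hvA, hvnB⟩
        apply hv
        rw [hC]
        refine Or.inl (Or.inl ((memH1 v).2 ⟨hvAB', ?_⟩))
        rw [← hmk]
        apply SimpleGraph.ConnectedComponent.sound
        exact (SimpleGraph.Adj.reachable (show (G.induce (A \ B)).Adj ⟨v, hvAB'⟩ ⟨u, huAB⟩ from hadj.symm))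
      · obtain ⟨huBA, hmk⟩ := (memH3 u).1 hu
        have hvnAB : v ∉ A \ B := fun hvAB' => hedge v hvAB' u huBA hadj.symm
        have hvB : v ∈ B := by
          rcases hvAB with h | h
          · by_contra hvB; exact hvnAB ⟨h, hvB⟩
          · exact h
        have hvnA : v ∉ A := by
          intro hvA
          exact hv (hSC ⟨hvA, hvB⟩)
        have hvBA' : v ∈ B \ A := ⟨hvB, hvnA⟩
        apply hv
        rw [hC]
        refine Or.inl (Or.inr ((memH3 v).2 ⟨hvBA', ?_⟩))
        rw [← hmk]
        apply SimpleGraph.ConnectedComponent.sound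
        exact (SimpleGraph.Adj.reachable (show (G.induce (B \ A)).Adj ⟨v, hvBA'⟩ ⟨u, huBA⟩ from hadj.symm))
  refine ⟨⟨hsepCD, by rw [hCD]; exact hcard⟩, hCD, ?_⟩
  rintro (⟨hAC, hDB⟩ | ⟨hAD, hCB⟩ | ⟨hBC, hDA⟩ | ⟨hBD, hCA⟩)
  · exact hx2nC (hAC x2.2.1)
  · have : (x1 : V) ∈ B := hCB (by rw [hC]; exact Or.inl (Or.inl hx1C))
    exact x1.2.2 this
  · exact hx4nC (hBC x4.2.1)
  · have : (x3 : V) ∈ A := hCA (by rw [hC]; exact Or.inl (Or.inr hx3C))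
    exact x3.2.2 this
end

section
/- Let G be a 2-connected graph with a normal spanning tree T. If {u, v} is a 2-separator of G (i.e., G − {u,v} is disconnected), then u and v are comparable in T, meaning one is an ancestor of the other. -/
open SimpleGraph

variable {V : Type*}

section helpers
variable {T : SimpleGraph V} {r : V}

lemma anc_self (T : SimpleGraph V) (r x : V) : Anc T r x x := fun p _ => p.end_mem_support

lemma anc_root (T : SimpleGraph V) (r x : V) : Anc T r r x := fun p _ => p.start_mem_support

lemma anc_of_mem (hT : T.IsTree) {x a : V} {p : T.Walk r x} (hp : p.IsPath)
    (ha : a ∈ p.support) : Anc T r a x := by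
  intro q hq
  obtain ⟨w, -, hu⟩ := hT.existsUnique_path r x
  rwa [hu q hq, ← hu p hp]

lemma anc_trans (hT : T.IsTree) {a b c : V} (hab : Anc T r a b) (hbc : Anc T r b c) :
    Anc T r a c := by
  classical
  intro p hp
  have hb : b ∈ p.support := hbc p hp
  have := hab (p.takeUntil b hb) (hp.takeUntil hb)
  exact p.support_takeUntil_subset hb this

lemma anc_antisymm (hT : T.IsTree) {a b : V} (hab : Anc T r a b) (hba : Anc T r b a) :
    a = b := by
  classical
  by_contra hne
  obtain ⟨p, hp, -⟩ := hT.existsUnique_path r b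
  have ha : a ∈ p.support := hab p hp
  have hbq : b ∈ (p.takeUntil a ha).support := hba _ (hp.takeUntil ha)
  have hnd := hp.support_nodup
  rw [← p.take_spec ha, Walk.support_append, List.nodup_append] at hnd
  refine hnd.2.2 _ hbq _ ?_ rfl
  have : b ∈ (p.dropUntil a ha).support := (p.dropUntil a ha).end_mem_support
  rw [Walk.support_eq_cons, List.mem_cons] at this
  rcases this with h | h
  · exact absurd h.symm hne
  · exact h

lemma anc_total_of_anc (hT : T.IsTree) {a b x : V} (hax : Anc T r a x) (hbx : Anc T r b x) :
    Anc T r a b ∨ Anc T r b a := by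
  classical
  obtain ⟨p, hp, -⟩ := hT.existsUnique_path r x
  have ha : a ∈ p.support := hax p hp
  have hb : b ∈ p.support := hbx p hp
  by_cases hA : a ∈ (p.takeUntil b hb).support
  · exact Or.inl (anc_of_mem hT (hp.takeUntil hb) hA)
  · right
    -- a is in the drop part
    have haD : a ∈ (p.dropUntil b hb).support := by
      have := ha
      rw [← p.take_spec hb, Walk.mem_support_append_iff] at this
      exact this.resolve_left hA
    set q := p.takeUntil b hb with hq
    set d := p.dropUntil b hb with hd
    have hqp : q.IsPath := hp.takeUntil hb
    have hdp : d.IsPath := hp.dropUntil hb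
    have hnd := hp.support_nodup
    rw [← p.take_spec hb, Walk.support_append, List.nodup_append] at hnd
    -- candidate path r → b → a
    have hpath : (q.append (d.takeUntil a haD)).IsPath := by
      rw [Walk.isPath_def, Walk.support_append, List.nodup_append]
      refine ⟨hqp.support_nodup, ?_, ?_⟩
      · have : (d.takeUntil a haD).IsPath := hdp.takeUntil haD
        have h2 := this.support_nodup
        rw [Walk.support_eq_cons, List.nodup_cons] at h2
        exact h2.2
      · intro c hc c' hc' hcc
        subst hcc
        -- c ∈ q.support, c ∈ (d.takeUntil a).support.tail ⊆ d.support.tail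
        refine hnd.2.2 _ hc _ ?_ rfl
        have htl : (d.takeUntil a haD).support.tail ⊆ d.support.tail := by
          intro w hw
          have hwd : w ∈ d.support :=
            d.support_takeUntil_subset haD (List.tail_subset _ hw)
          have hwb : w ≠ b := by
            intro h
            have hnodup := (hdp.takeUntil haD).support_nodup
            rw [Walk.support_eq_cons, List.nodup_cons] at hnodup
            exact hnodup.1 (h ▸ hw)
          rw [Walk.support_eq_cons, List.mem_cons] at hwd
          exact hwd.resolve_left hwb
        exact htl hc'
    have hbmem : b ∈ (q.append (d.takeUntil a haD)).support := by
      rw [Walk.mem_support_append_iff]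
      exact Or.inl q.end_mem_support
    exact anc_of_mem hT hpath hbmem

end helpers

section aux2
variable {G : SimpleGraph V}

lemma walk_of_induce {s : Set V} : ∀ {x y : s} (_ : (G.induce s).Walk x y),
    ∃ q : G.Walk x y, ∀ w ∈ q.support, w ∈ s := by
  intro x y p
  induction p with
  | nil => exact ⟨Walk.nil, by simp [Subtype.coe_prop]⟩
  | cons h p ih =>
    obtain ⟨q, hq⟩ := ih
    have hadj : G.Adj _ _ := h
    refine ⟨Walk.cons hadj q, ?_⟩
    intro w hw
    rw [Walk.mem_support_iff] at hw
    rcases hw with rfl | hw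
    · exact Subtype.coe_prop _
    · exact hq w hw

lemma reachable_induce_of_walk {s : Set V} :
    ∀ {x y : V} (p : G.Walk x y) (h : ∀ w ∈ p.support, w ∈ s),
    (G.induce s).Reachable ⟨x, h x p.start_mem_support⟩ ⟨y, h y p.end_mem_support⟩ := by
  intro x y p
  induction p with
  | nil => intro h; rfl
  | @cons x m y hadj p ih =>
    intro h
    have hm : m ∈ s := h m (by simp)
    have h1 : (G.induce s).Adj ⟨x, h x (Walk.start_mem_support _)⟩ ⟨m, hm⟩ := by
      simp [comap_adj, hadj]
    have h2 := ih (fun w hw => h w (by simp [hw]))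
    exact (h1.reachable).trans h2

lemma exists_crossing {D : Set V} :
    ∀ {x y : V} (p : G.Walk x y), x ∈ D → y ∉ D →
    ∃ w z, w ∈ D ∧ z ∉ D ∧ G.Adj w z ∧ w ∈ p.support ∧ z ∈ p.support := by
  intro x y p
  induction p with
  | nil => intro h h'; exact absurd h h'
  | @cons x m y hadj p ih =>
    intro hx hy
    by_cases hm : m ∈ D
    · obtain ⟨w, z, h1, h2, h3, h4, h5⟩ := ih hm hy
      exact ⟨w, z, h1, h2, h3, by simp [h4], by simp [h5]⟩
    · exact ⟨x, m, hx, hm, hadj, by simp, by simp⟩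

end aux2

section aux3
variable {G : SimpleGraph V}

lemma escape {T : SimpleGraph V} {r : V}
    (htree : T.IsTree) (hle : T ≤ G)
    (hnorm : ∀ u v : V, G.Adj u v → Anc T r u v ∨ Anc T r v u)
    {a b x : V}
    (hconn : (G.induce {w | w ≠ a}).Connected)
    (hab : ¬ Anc T r a b) (hba : ¬ Anc T r b a)
    (hxa : x ≠ a) (hxb : x ≠ b) (hax : Anc T r a x) :
    ∃ p : G.Walk x r, ∀ w ∈ p.support, w ≠ a ∧ w ≠ b := by
  classical
  have hra : a ≠ r := fun h => hab (h ▸ anc_root T r b)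
  obtain ⟨π, hπ, -⟩ := htree.existsUnique_path r x
  have haπ : a ∈ π.support := hax π hπ
  set q := π.takeUntil a haπ with hqdef
  have hqP : q.IsPath := hπ.takeUntil haπ
  have key_q : ∀ c ∈ q.support, Anc T r c a := fun c hc => anc_of_mem htree hqP hc
  have hbq : b ∉ q.support := fun h => hba (key_q b h)
  have hdP : (π.dropUntil a haπ).IsPath := hπ.dropUntil haπ
  have hdnil : ¬ (π.dropUntil a haπ).Nil := Walk.not_nil_of_ne (fun h => hxa h.symm)
  rw [Walk.not_nil_iff] at hdnil
  obtain ⟨a', hadj, d', hd'⟩ := hdnil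
  have ha'tail : a' ∈ (π.dropUntil a haπ).support.tail := by rw [hd']; simp
  have hπnodup := hπ.support_nodup
  rw [← π.take_spec haπ, Walk.support_append, List.nodup_append] at hπnodup
  have ha'q : a' ∉ q.support := fun h => hπnodup.2.2 _ h _ ha'tail rfl
  set Q : T.Walk r a' := q.concat hadj with hQdef
  have hQP : Q.IsPath := by
    rw [Walk.isPath_def, hQdef, Walk.support_concat,
      List.nodup_append]
    exact ⟨hqP.support_nodup, List.nodup_singleton _, by
      intro c hc c' hc'; simp at hc'; subst hc'; exact fun h => ha'q (h ▸ hc)⟩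
  obtain ⟨P0, -, hu0⟩ := htree.existsUnique_path r a'
  have hQeq : Q = P0 := hu0 Q hQP
  have hQsup : ∀ c, c ∈ Q.support ↔ c ∈ q.support ∨ c = a' := by
    intro c
    rw [hQdef, Walk.support_concat]
    simp
  have hAncQ : ∀ c, Anc T r c a' → c ∈ q.support ∨ c = a' :=
    fun c h => (hQsup c).1 (h Q hQP)
  have haa' : Anc T r a a' := anc_of_mem htree hQP ((hQsup a).2 (Or.inl q.end_mem_support))
  set D : Set V := {w | Anc T r a' w} with hD
  have ha'π : a' ∈ π.support :=
    π.support_dropUntil_subset haπ (List.tail_subset _ ha'tail)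
  have hxD : x ∈ D := anc_of_mem htree hπ ha'π
  have haD : a ∉ D := fun h => hadj.ne (anc_antisymm htree haa' h)
  have hbD : b ∉ D := fun h => hab (anc_trans htree haa' h)
  have hrD : r ∉ D := by
    intro h
    have h1 : a' = r := anc_antisymm htree h (anc_root T r a')
    exact hra (anc_antisymm htree (h1 ▸ haa') (anc_root T r a))
  -- subtree walks within D
  have subtree : ∀ w ∈ D, ∃ tw : T.Walk a' w, ∀ c ∈ tw.support, c ∈ D := by
    intro w hw
    obtain ⟨pw, hpw, -⟩ := htree.existsUnique_path r w
    have ha'w : a' ∈ pw.support := hw pw hpw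
    refine ⟨pw.dropUntil a' ha'w, ?_⟩
    intro c hc
    have hcw : Anc T r c w := anc_of_mem htree hpw (pw.support_dropUntil_subset ha'w hc)
    rcases anc_total_of_anc htree (hw : Anc T r a' w) hcw with h | h
    · exact h
    · -- Anc c a' : show c = a' (else contradiction)
      by_cases hca' : c = a'
      · exact hca' ▸ (fun p _ => p.end_mem_support)
      · exfalso
        have hcQ : c ∈ Q.support := h Q hQP
        have hcT : c ∈ (pw.takeUntil a' ha'w).support := by
          have : pw.takeUntil a' ha'w = P0 := hu0 _ (hpw.takeUntil ha'w)
          rw [this, ← hQeq]; exact hcQ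
        have hctail : c ∈ (pw.dropUntil a' ha'w).support.tail := by
          have := hc
          rw [Walk.support_eq_cons, List.mem_cons] at this
          exact this.resolve_left hca'
        have hnd := hpw.support_nodup
        rw [← pw.take_spec ha'w, Walk.support_append, List.nodup_append] at hnd
        exact hnd.2.2 _ hcT _ hctail rfl
  -- crossing edge from D out, via connectivity of G - a
  obtain ⟨W0⟩ := hconn.preconnected ⟨x, hxa⟩ ⟨r, hra.symm⟩
  obtain ⟨W, hW⟩ := walk_of_induce W0
  obtain ⟨w, z, hwD, hzD, hwz, hwsup, hzsup⟩ := exists_crossing W hxD hrD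
  have hza : z ≠ a := hW z hzsup
  have hzw : Anc T r z w := by
    rcases hnorm w z hwz with h | h
    · exact absurd (anc_trans htree hwD h) hzD
    · exact h
  have hza' : Anc T r z a' := by
    rcases anc_total_of_anc htree (hwD : Anc T r a' w) hzw with h | h
    · exact absurd h hzD
    · exact h
  have hzq : z ∈ q.support := by
    rcases hAncQ z hza' with h | h
    · exact h
    · exact absurd (h ▸ (fun p _ => p.end_mem_support : Anc T r a' a')) hzD
  have hzb : z ≠ b := fun h => hbq (h ▸ hzq)
  -- final walk assembly
  obtain ⟨tx, htx⟩ := subtree x hxD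
  obtain ⟨tw, htw⟩ := subtree w hwD
  have haqz : a ∉ (q.takeUntil z hzq).support := by
    have hqnd := hqP.support_nodup
    rw [← q.take_spec hzq, Walk.support_append, List.nodup_append] at hqnd
    intro h
    refine hqnd.2.2 _ h _ ?_ rfl
    have : a ∈ (q.dropUntil z hzq).support := (q.dropUntil z hzq).end_mem_support
    rw [Walk.support_eq_cons, List.mem_cons] at this
    exact this.resolve_left (fun hh => hza hh.symm)
  refine ⟨(Walk.mapLe hle (tx.reverse.append tw)).append
    (Walk.cons hwz (Walk.mapLe hle (q.takeUntil z hzq)).reverse), ?_⟩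
  intro c hc
  rw [Walk.mem_support_append_iff] at hc
  have hmap : ∀ {y₁ y₂ : V} (p : T.Walk y₁ y₂), (Walk.mapLe hle p).support = p.support := by
    intro y₁ y₂ p
    rw [Walk.mapLe, Walk.support_map]
    exact List.map_id _
  rcases hc with hc | hc
  · rw [hmap, Walk.mem_support_append_iff, Walk.support_reverse, List.mem_reverse] at hc
    have hcD : c ∈ D := by rcases hc with h | h; exacts [htx c h, htw c h]
    exact ⟨fun h => haD (h ▸ hcD), fun h => hbD (h ▸ hcD)⟩
  · rw [Walk.support_cons, List.mem_cons] at hc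
    rcases hc with rfl | hc
    · exact ⟨fun h => haD (h ▸ hwD), fun h => hbD (h ▸ hwD)⟩
    · rw [Walk.support_reverse, List.mem_reverse, hmap] at hc
      have hcq : c ∈ q.support := q.support_takeUntil_subset hzq hc
      exact ⟨fun h => haqz (h ▸ hc), fun h => hbq (h ▸ hcq)⟩

end aux3


/-- In a 2-connected graph with a normal spanning tree, the two vertices of any
2-separator are comparable in the tree. -/
theorem twoSeparator_comparable [Fintype V] (G T : SimpleGraph V) (r u v : V)
    (hG : TwoConnected G) (hT : IsNormalSpanningTree G T r) (huv : u ≠ v)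
    (hsep : ¬ (G.induce {w | w ≠ u ∧ w ≠ v}).Connected) :
    Anc T r u v ∨ Anc T r v u := by
  classical
  by_contra hcon
  push_neg at hcon
  obtain ⟨huv', hvu'⟩ := hcon
  apply hsep
  obtain ⟨htree, hle, hnorm⟩ := hT
  have hru : r ≠ u := fun h => huv' (h ▸ anc_root T r v)
  have hrv : r ≠ v := fun h => hvu' (h ▸ anc_root T r u)
  have key : ∀ x : V, x ≠ u → x ≠ v →
      ∃ p : G.Walk x r, ∀ w ∈ p.support, w ≠ u ∧ w ≠ v := by
    intro x hxu hxv
    by_cases hux : Anc T r u x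
    · exact escape htree hle hnorm (hG.2 u) huv' hvu' hxu hxv hux
    by_cases hvx : Anc T r v x
    · obtain ⟨p, hp⟩ := escape htree hle hnorm (hG.2 v) hvu' huv' hxv hxu hvx
      exact ⟨p, fun w hw => ⟨(hp w hw).2, (hp w hw).1⟩⟩
    · obtain ⟨π, hπ, -⟩ := htree.existsUnique_path r x
      refine ⟨(Walk.mapLe hle π).reverse, ?_⟩
      intro w hw
      rw [Walk.support_reverse, List.mem_reverse] at hw
      have hwπ : w ∈ π.support := by
        rw [Walk.mapLe, Walk.support_map] at hw
        simpa using hw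
      exact ⟨fun h => hux (anc_of_mem htree hπ (h ▸ hwπ)),
        fun h => hvx (anc_of_mem htree hπ (h ▸ hwπ))⟩
  rw [connected_iff]
  constructor
  · rintro ⟨x, hx⟩ ⟨y, hy⟩
    obtain ⟨p, hp⟩ := key x hx.1 hx.2
    obtain ⟨q, hq⟩ := key y hy.1 hy.2
    have h1 := reachable_induce_of_walk (s := {w | w ≠ u ∧ w ≠ v}) p hp
    have h2 := reachable_induce_of_walk (s := {w | w ≠ u ∧ w ≠ v}) q hq
    exact h1.trans h2.symm
  · exact ⟨⟨r, hru, hrv⟩⟩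
end
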